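/- Let f: ℝ → ℝ be admissible, i.e. f ∈ L¹(ℝ) ∩ L²(ℝ), ‖f‖_{L¹} = 1, f is even and real-valued, f(0) = 0, and f = f̂. Set A = A(f) and suppose A ≤ 1/2. Then for every 0 < x ≤ A one has f(x) ≤ 1/2 + ( sin(2π(A − 1/4)x) − sin(2πAx) )/(πx). -/

import Mathlib

open MeasureTheory Real
open scoped FourierTransform

/-- `A(g)`: the infimum of all `r > 0` such that `g x ≥ 0` for all `|x| > r`,
with the convention that the infimum of the empty set is `+∞`. -/
noncomputable def sgnRadius (g : ℝ → ℝ) : ENNReal :=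
  sInf (ENNReal.ofReal '' {r : ℝ | 0 < r ∧ ∀ x : ℝ, r < |x| → 0 ≤ g x})

/-!
Since `f` is real and equal to its Fourier transform, `f y = ∫ f t cos (2πyt) dt`; at `y = 0`
this gives `∫ f = 0`, hence `f x = ∫ (-f t) (1 - cos (2πxt)) dt ≤ ∫ f⁻ (t) (1 - cos (2πxt)) dt`.
The negative part satisfies `0 ≤ f⁻ ≤ ‖f‖₁ = 1`, vanishes for `|t| > A`, and has mass
`(‖f‖₁ - ∫ f) / 2 = 1/2`, which forces `A ≥ 1/4`. Since `1 - cos (2πxt)` increases with `|t|` on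
`[-A, A]`, the bathtub principle bounds the last integral by its value for the indicator of
`A - 1/4 ≤ |t| ≤ A`, which is the right-hand side.
-/

lemma nonneg_of_sgnRadius_lt {g : ℝ → ℝ} {t : ℝ} (h : sgnRadius g < ENNReal.ofReal |t|) :
    0 ≤ g t := by
  obtain ⟨_, ⟨r, ⟨hr0, hr⟩, rfl⟩, hrt⟩ := sInf_lt_iff.1 h
  exact hr t (ENNReal.ofReal_lt_ofReal_iff'.1 hrt).1

theorem Real.re_fourier_ofReal {f : ℝ → ℝ} (hf : Integrable f) (y : ℝ) :
    (𝓕 (fun t => (f t : ℂ)) y).re = ∫ t, f t * cos (2 * π * y * t) := by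
  have hexp : Integrable (fun t : ℝ => Complex.exp (↑(-2 * π * t * y) * Complex.I) • (f t : ℂ)) :=
    hf.ofReal.bdd_mul (by fun_prop) (.of_forall fun t => (Complex.norm_exp_ofReal_mul_I _).le)
  rw [Real.fourier_real_eq_integral_exp_smul, ← RCLike.re_eq_complex_re, ← integral_re hexp]
  congr 1 with t
  rw [smul_eq_mul, RCLike.re_eq_complex_re, Complex.re_mul_ofReal, Complex.exp_ofReal_mul_I_re,
    mul_comm, show -2 * π * t * y = -(2 * π * y * t) by ring, cos_neg]

lemma Real.norm_fourier_le_integral_norm {E : Type*} [NormedAddCommGroup E] [NormedSpace ℂ E]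
    (f : ℝ → E) (y : ℝ) : ‖𝓕 f y‖ ≤ ∫ t, ‖f t‖ :=
  VectorFourier.norm_fourierIntegral_le_integral_norm _ _ _ _ _

lemma MeasureTheory.Integrable.mul_cos_mul {f : ℝ → ℝ} (hf : Integrable f) (c : ℝ) :
    Integrable (fun t => f t * cos (c * t)) :=
  hf.mul_bdd (by fun_prop) (.of_forall fun t => abs_cos_le_one _)

lemma MeasureTheory.Integrable.mul_one_sub_cos_mul {f : ℝ → ℝ} (hf : Integrable f) (c : ℝ) :
    Integrable (fun t => f t * (1 - cos (c * t))) := by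
  simpa only [mul_sub, mul_one, Pi.sub_def] using hf.sub (hf.mul_cos_mul c)

lemma integral_mul_cos_le_integral_negPart_mul {f : ℝ → ℝ} (hf : Integrable f)
    (hf0 : ∫ t, f t = 0) (c : ℝ) :
    ∫ t, f t * cos (c * t) ≤ ∫ t, (f t)⁻ * (1 - cos (c * t)) := by
  have hrw : ∫ t, f t * cos (c * t) = ∫ t, -(f t * (1 - cos (c * t))) := by
    rw [integral_neg, ← sub_zero (∫ t, f t * cos (c * t)), ← hf0,
      ← integral_sub (hf.mul_cos_mul c) hf, ← integral_neg]
    congr 1 with t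
    ring
  rw [hrw]
  refine integral_mono (hf.mul_one_sub_cos_mul c).neg
    (hf.neg_part.mul_one_sub_cos_mul c) fun t => ?_
  rw [← neg_mul]
  exact mul_le_mul_of_nonneg_right (neg_le_negPart _) (by linarith [cos_le_one (c * t)])

lemma integral_negPart_eq {α : Type*} [MeasurableSpace α] {μ : Measure α} {f : α → ℝ}
    (hf : Integrable f μ) : ∫ t, (f t)⁻ ∂μ = ((∫ t, |f t| ∂μ) - ∫ t, f t ∂μ) / 2 := by
  have hneg : ∀ a : ℝ, a⁻ = (|a| - a) / 2 := fun a => by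
    linarith [posPart_add_negPart a, posPart_sub_negPart a]
  simp_rw [hneg]
  rw [integral_div, integral_sub hf.abs hf]

lemma integral_le_measureReal_of_le_one {α : Type*} [MeasurableSpace α] {μ : Measure α}
    {g : α → ℝ} {s : Set α} (hs : MeasurableSet s) (hμs : μ s ≠ ⊤) (hg : Integrable g μ)
    (hg1 : ∀ t, g t ≤ 1) (hgs : ∀ t ∉ s, g t = 0) :
    ∫ t, g t ∂μ ≤ μ.real s := by
  rw [← integral_indicator_one hs]
  refine integral_mono hg ((integrableOn_const (C := (1 : ℝ)) hμs).integrable_indicator hs)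
    fun t => ?_
  by_cases ht : t ∈ s
  · simpa [ht] using hg1 t
  · simp [ht, hgs t ht]

theorem integral_mul_le_bathtub {α : Type*} [MeasurableSpace α] {μ : Measure α}
    {g w : α → ℝ} {E : Set α} {m : ℝ} (hE : MeasurableSet E) (hμE : μ E ≠ ⊤)
    (hg : Integrable g μ) (hgw : Integrable (fun t => g t * w t) μ) (hw : IntegrableOn w E μ)
    (hg0 : ∀ t, 0 ≤ g t) (hg1 : ∀ t, g t ≤ 1)
    (hw_in : ∀ t ∈ E, m ≤ w t) (hw_out : ∀ t ∉ E, g t ≠ 0 → w t ≤ m) :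
    ∫ t, g t * w t ∂μ ≤ ∫ t in E, w t ∂μ + m * (∫ t, g t ∂μ - μ.real E) := by
  have hone : Integrable (E.indicator 1) μ :=
    (integrableOn_const (C := (1 : ℝ)) hμE).integrable_indicator hE
  have hsub : Integrable (fun t => g t - E.indicator 1 t) μ := hg.sub hone
  calc ∫ t, g t * w t ∂μ ≤ ∫ t, (E.indicator w t + m * (g t - E.indicator 1 t)) ∂μ := by
        refine integral_mono hgw ((hw.integrable_indicator hE).add
          (hsub.const_mul m)) fun t => ?_
        by_cases ht : t ∈ E
        · simp only [Set.indicator_of_mem ht, Pi.one_apply]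
          nlinarith [hw_in t ht, hg1 t]
        · simp only [Set.indicator_of_notMem ht, zero_add, sub_zero]
          rcases eq_or_ne (g t) 0 with h0 | h0
          · simp [h0]
          · nlinarith [hw_out t ht h0, hg0 t]
    _ = ∫ t in E, w t ∂μ + m * (∫ t, g t ∂μ - μ.real E) := by
        rw [integral_add (hw.integrable_indicator hE) (hsub.const_mul m),
          integral_const_mul, integral_sub hg hone, integral_indicator hE,
          integral_indicator_one hE]

lemma integral_one_sub_cos_mul {c : ℝ} (hc : c ≠ 0) (a b : ℝ) :
    ∫ t in a..b, (1 - cos (c * t)) = b - a - (sin (c * b) - sin (c * a)) / c := by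
  rw [intervalIntegral.integral_sub intervalIntegrable_const
    ((by fun_prop : Continuous fun t => cos (c * t)).intervalIntegrable a b),
    intervalIntegral.integral_const, intervalIntegral.integral_comp_mul_left (fun s => cos s) hc,
    integral_cos, smul_eq_mul, smul_eq_mul, mul_one, inv_mul_eq_div]

lemma cos_le_cos_of_abs_le_abs {s t : ℝ} (hst : |s| ≤ |t|) (ht : |t| ≤ π) : cos t ≤ cos s := by
  rw [← cos_abs s, ← cos_abs t]
  exact cos_le_cos_of_nonneg_of_le_pi (abs_nonneg s) ht hst

theorem integral_mul_one_sub_cos_le {g : ℝ → ℝ} {A B c : ℝ} (hg : Integrable g)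
    (hg0 : ∀ t, 0 ≤ g t) (hg1 : ∀ t, g t ≤ 1) (hgA : ∀ t, A < |t| → g t = 0)
    (hB : 0 ≤ B) (hBA : B ≤ A) (hmass : ∫ t, g t = 2 * (A - B)) (hc : 0 < c) (hcA : c * A ≤ π) :
    ∫ t, g t * (1 - cos (c * t)) ≤ 2 * (A - B) - 2 * (sin (c * A) - sin (c * B)) / c := by
  -- `B ≤ |t| ≤ A`, with `t = B` dropped so that the two pieces stay disjoint when `B = 0`
  set E := Set.Icc (-A) (-B) ∪ Set.Ioc B A
  have hdisj : Disjoint (Set.Icc (-A) (-B)) (Set.Ioc B A) :=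
    Set.disjoint_left.2 fun t h1 h2 => by linarith [h1.2, h2.1]
  have hEA : E ⊆ Set.Icc (-A) A := Set.union_subset (Set.Icc_subset_Icc le_rfl (by linarith))
    (Set.Ioc_subset_Icc_self.trans (Set.Icc_subset_Icc (by linarith) le_rfl))
  have hw : IntegrableOn (fun t => 1 - cos (c * t)) E :=
    (by fun_prop : Continuous fun t => 1 - cos (c * t)).integrableOn_Icc.mono_set hEA
  have hcos_anti : ∀ s t, |s| ≤ |t| → |t| ≤ A → cos (c * t) ≤ cos (c * s) := fun s t hst ht =>
    cos_le_cos_of_abs_le_abs (by rw [abs_mul, abs_mul]; gcongr)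
      (by rw [abs_mul, abs_of_pos hc]; nlinarith)
  have hIcc : volume (Set.Icc (-A) (-B)) ≠ ⊤ := measure_Icc_lt_top.ne
  have hIoc : volume (Set.Ioc B A) ≠ ⊤ := measure_Ioc_lt_top.ne
  have hbathtub := integral_mul_le_bathtub (m := 1 - cos (c * B))
    (measurableSet_Icc.union measurableSet_Ioc) (measure_union_ne_top hIcc hIoc)
    hg (hg.mul_one_sub_cos_mul c) hw hg0 hg1 ?_ ?_
  · have hvol : volume.real E = 2 * (A - B) := by
      rw [measureReal_union hdisj measurableSet_Ioc hIcc hIoc,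
        volume_real_Icc_of_le (by linarith), volume_real_Ioc_of_le hBA]
      ring
    have hwE :
        ∫ t in E, (1 - cos (c * t)) = 2 * (A - B) - 2 * (sin (c * A) - sin (c * B)) / c := by
      rw [setIntegral_union hdisj measurableSet_Ioc (hw.mono_set Set.subset_union_left)
        (hw.mono_set Set.subset_union_right), integral_Icc_eq_integral_Ioc,
        ← intervalIntegral.integral_of_le (by linarith), ← intervalIntegral.integral_of_le hBA,
        integral_one_sub_cos_mul hc.ne', integral_one_sub_cos_mul hc.ne']
      simp only [mul_neg, sin_neg]
      ring
    rwa [hvol, hmass, sub_self, mul_zero, add_zero, hwE] at hbathtub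
  · intro t ht
    have : B ≤ |t| ∧ |t| ≤ A := by
      rcases ht with ⟨h1, h2⟩ | ⟨h1, h2⟩ <;> rcases abs_cases t with ⟨h, _⟩ | ⟨h, _⟩ <;>
        constructor <;> linarith
    linarith [hcos_anti B t (by rw [abs_of_nonneg hB]; exact this.1) this.2]
  · intro t ht hgt
    have hA : |t| ≤ A := not_lt.1 fun h => hgt (hgA t h)
    have : |t| ≤ B := by
      simp only [Set.mem_union, Set.mem_Icc, Set.mem_Ioc, not_or, not_and_or, not_le] at ht
      rcases abs_cases t with ⟨h, _⟩ | ⟨h, _⟩ <;> rcases ht with ⟨_ | _, _ | _⟩ <;> linarith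
    linarith [hcos_anti t B (by rwa [abs_of_nonneg hB]) (by rwa [abs_of_nonneg hB])]

theorem stmt14_general (f : ℝ → ℝ) (hint : Integrable f)
    (hnorm : ∫ x : ℝ, |f x| = 1) (hf0 : f 0 = 0)
    (hself : ∀ x : ℝ, 𝓕 (fun t : ℝ => (f t : ℂ)) x = (f x : ℂ))
    (A : ℝ) (hA : sgnRadius f = ENNReal.ofReal A) (hA2 : A ≤ 1 / 2) :
    ∀ x : ℝ, 0 < x → x ≤ A →
      f x ≤ 1 / 2 + (Real.sin (2 * π * (A - 1 / 4) * x) - Real.sin (2 * π * A * x)) / (π * x) := by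
  intro x hx hxA
  have hcos : ∀ y, f y = ∫ t, f t * cos (2 * π * y * t) := fun y => by
    rw [← re_fourier_ofReal hint, hself, Complex.ofReal_re]
  have hmean : ∫ t, f t = 0 := by simpa [hf0] using (hcos 0).symm
  have hbound : ∀ t, |f t| ≤ 1 := fun t => by
    simpa [hself, hnorm] using norm_fourier_le_integral_norm (fun t => (f t : ℂ)) t
  have hneg_mass : ∫ t, (f t)⁻ = 1 / 2 := by
    rw [integral_negPart_eq hint, hnorm, hmean]
    norm_num
  have hneg_le_one : ∀ t, (f t)⁻ ≤ 1 := fun t =>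
    max_le ((neg_le_abs _).trans (hbound t)) zero_le_one
  have hneg_supp : ∀ t, A < |t| → (f t)⁻ = 0 := fun t ht => negPart_eq_zero.2 <|
    nonneg_of_sgnRadius_lt <| hA ▸ (ENNReal.ofReal_lt_ofReal_iff_of_nonneg (by linarith)).2 ht
  have hA4 : 1 / 4 ≤ A := by
    have := integral_le_measureReal_of_le_one (g := fun t => (f t)⁻) measurableSet_Icc
      measure_Icc_lt_top.ne hint.neg_part hneg_le_one fun t ht =>
        hneg_supp t (by rwa [Set.mem_Icc, ← abs_le, not_le] at ht)
    rw [hneg_mass, volume_real_Icc_of_le (by linarith)] at this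
    linarith
  calc f x = ∫ t, f t * cos (2 * π * x * t) := hcos x
    _ ≤ ∫ t, (f t)⁻ * (1 - cos (2 * π * x * t)) :=
      integral_mul_cos_le_integral_negPart_mul hint hmean _
    _ ≤ 2 * (A - (A - 1 / 4)) -
          2 * (sin (2 * π * x * A) - sin (2 * π * x * (A - 1 / 4))) / (2 * π * x) :=
      integral_mul_one_sub_cos_le hint.neg_part (fun t => negPart_nonneg _) hneg_le_one hneg_supp
        (by linarith) (by linarith) (by rw [hneg_mass]; ring) (by positivity)
        (by nlinarith [pi_pos, mul_le_mul hxA hA2 (by linarith) (by linarith)])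
    _ = 1 / 2 + (sin (2 * π * (A - 1 / 4) * x) - sin (2 * π * A * x)) / (π * x) := by
      field_simp
      ring_nf

theorem stmt14 (f : ℝ → ℝ) (hint : Integrable f) (hL2 : MemLp f 2 volume)
    (hnorm : ∫ x : ℝ, |f x| = 1) (heven : ∀ x, f (-x) = f x) (hf0 : f 0 = 0)
    (hself : ∀ x : ℝ, 𝓕 (fun t : ℝ => (f t : ℂ)) x = (f x : ℂ))
    (A : ℝ) (hA0 : 0 ≤ A) (hA : sgnRadius f = ENNReal.ofReal A) (hA2 : A ≤ 1 / 2) :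
    ∀ x : ℝ, 0 < x → x ≤ A →
      f x ≤ 1 / 2 + (Real.sin (2 * π * (A - 1 / 4) * x) - Real.sin (2 * π * A * x)) / (π * x) :=
  stmt14_general f hint hnorm hf0 hself A hA hA2
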